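/- The Minkowski question mark function is the unique bounded function f : [0,1] → ℝ with f(0)=0, f(1)=1 satisfying f(x) = (1/2) f(x/(1-x)) for 0 ≤ x ≤ 1/2 and f(x) = 1 − (1/2) f((1-x)/x) for 1/2 < x ≤ 1. -/

import Mathlib

/-- The self-similarity operator for Minkowski's question mark function. -/
noncomputable def minkT (f : ℝ → ℝ) : ℝ → ℝ := fun x =>
  if x ≤ 1/2 then (1/2) * f (x / (1 - x)) else 1 - (1/2) * f ((1 - x) / x)

/-- Minkowski's question mark function, obtained as the (uniform) limit of the
iteration of `minkT` starting from the identity distribution function. -/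
noncomputable def minkQ : ℝ → ℝ := fun x =>
  Filter.limUnder Filter.atTop (fun n => (minkT^[n] id) x)

/-!
Both branches of `minkT` map `[0,1]` into itself and halve differences, so `minkT` is a
`1/2`-contraction for the sup-distance on `[0,1]`. Hence the iterates of `minkT` from `id`
converge uniformly, at a geometric rate, to a fixed point, which is `minkQ`; and two bounded
fixed points are at distance at most `2⁻ⁿ` times a constant for every `n`, so they coincide.
-/

open Filter Set Topology

/-- Phrased with an arbitrary bound `C` instead of a supremum, so that no boundedness is needed. -/
def SupContractingOn {α : Type*} (K : ℝ) (T : (α → ℝ) → α → ℝ) (s : Set α) : Prop :=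
  ∀ f g C, (∀ y ∈ s, |f y - g y| ≤ C) → ∀ x ∈ s, |T f x - T g x| ≤ K * C

noncomputable def iterateLim {α : Type*} (T : (α → ℝ) → α → ℝ) (f : α → ℝ) : α → ℝ :=
  fun x => limUnder atTop (fun n => T^[n] f x)

theorem eq_of_abs_sub_le_pow_mul {K D a b : ℝ} (hK₀ : 0 ≤ K) (hK₁ : K < 1)
    (h : ∀ n : ℕ, |a - b| ≤ K ^ n * D) : a = b := by
  have hlim : Tendsto (fun n : ℕ => K ^ n * D) atTop (𝓝 0) := by
    simpa using (tendsto_pow_atTop_nhds_zero_of_lt_one hK₀ hK₁).mul_const D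
  exact sub_eq_zero.mp (abs_nonpos_iff.mp (ge_of_tendsto' hlim h))

namespace SupContractingOn

variable {α : Type*} {K C : ℝ} {T : (α → ℝ) → α → ℝ} {s : Set α} {f g : α → ℝ}

theorem abs_iterate_sub_le (hT : SupContractingOn K T s) (hfg : ∀ y ∈ s, |f y - g y| ≤ C)
    (n : ℕ) : ∀ x ∈ s, |T^[n] f x - T^[n] g x| ≤ K ^ n * C := by
  induction n with
  | zero => simpa using hfg
  | succ n ih =>
    intro x hx
    rw [Function.iterate_succ_apply', Function.iterate_succ_apply', pow_succ', mul_assoc]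
    exact hT _ _ _ ih x hx

theorem eqOn_of_fixed (hT : SupContractingOn K T s) (hK₀ : 0 ≤ K) (hK₁ : K < 1)
    (hf : ∃ M, ∀ x ∈ s, |f x| ≤ M) (hg : ∃ M, ∀ x ∈ s, |g x| ≤ M)
    (hTf : EqOn (T f) f s) (hTg : EqOn (T g) g s) : EqOn f g s := by
  obtain ⟨M, hM⟩ := hf
  obtain ⟨N, hN⟩ := hg
  have hfg : ∀ n : ℕ, ∀ x ∈ s, |f x - g x| ≤ K ^ n * (M + N) := by
    intro n
    induction n with
    | zero =>
      intro x hx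
      simpa using (abs_sub _ _).trans (add_le_add (hM x hx) (hN x hx))
    | succ n ih =>
      intro x hx
      rw [← hTf hx, ← hTg hx, pow_succ', mul_assoc]
      exact hT _ _ _ ih x hx
  exact fun x hx => eq_of_abs_sub_le_pow_mul hK₀ hK₁ (hfg · x hx)

section Iterates

variable (hT : SupContractingOn K T s) (hK : K < 1) (hf : ∀ y ∈ s, |T f y - f y| ≤ C)
include hT hf

theorem dist_iterate_succ_le (n : ℕ) {x : α} (hx : x ∈ s) :
    dist (T^[n] f x) (T^[n + 1] f x) ≤ C * K ^ n := by
  rw [Real.dist_eq, Function.iterate_succ_apply, mul_comm]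
  exact hT.abs_iterate_sub_le (fun y hy => by rw [abs_sub_comm]; exact hf y hy) n x hx

include hK

theorem tendsto_iterateLim {x : α} (hx : x ∈ s) :
    Tendsto (fun n => T^[n] f x) atTop (𝓝 (iterateLim T f x)) :=
  (cauchySeq_of_le_geometric K C hK (hT.dist_iterate_succ_le hf · hx)).tendsto_limUnder

theorem abs_iterate_sub_iterateLim_le (n : ℕ) {x : α} (hx : x ∈ s) :
    |T^[n] f x - iterateLim T f x| ≤ C * K ^ n / (1 - K) :=
  dist_le_of_le_geometric_of_tendsto K C hK (hT.dist_iterate_succ_le hf · hx)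
    (hT.tendsto_iterateLim hK hf hx) n

theorem iterateLim_fixed (hK₀ : 0 ≤ K) : EqOn (T (iterateLim T f)) (iterateLim T f) s := by
  intro x hx
  set L := iterateLim T f
  refine eq_of_abs_sub_le_pow_mul hK₀ hK (D := 2 * K * C / (1 - K)) fun n => ?_
  have hnear (m : ℕ) : ∀ y ∈ s, |T^[m] f y - L y| ≤ C * K ^ m / (1 - K) :=
    fun y hy => hT.abs_iterate_sub_iterateLim_le hK hf m hy
  have hT_near : |T L x - T^[n + 1] f x| ≤ K * (C * K ^ n / (1 - K)) := by
    rw [Function.iterate_succ_apply', abs_sub_comm]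
    exact hT _ _ _ (hnear n) x hx
  calc |T L x - L x| ≤ |T L x - T^[n + 1] f x| + |T^[n + 1] f x - L x| := abs_sub_le _ _ _
    _ ≤ K * (C * K ^ n / (1 - K)) + C * K ^ (n + 1) / (1 - K) :=
        add_le_add hT_near (hnear (n + 1) x hx)
    _ = K ^ n * (2 * K * C / (1 - K)) := by ring

theorem iterateLim_bounded (hf₀ : ∃ M, ∀ x ∈ s, |f x| ≤ M) :
    ∃ M, ∀ x ∈ s, |iterateLim T f x| ≤ M := by
  obtain ⟨M, hM⟩ := hf₀
  refine ⟨M + C / (1 - K), fun x hx => ?_⟩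
  have h := hT.abs_iterate_sub_iterateLim_le hK hf 0 hx
  simp only [Function.iterate_zero, id_eq, pow_zero, mul_one] at h
  linarith [abs_sub_abs_le_abs_sub (iterateLim T f x) (f x), abs_sub_comm (f x) (iterateLim T f x),
    hM x hx]

end Iterates

end SupContractingOn

theorem div_one_sub_mem_Icc {x : ℝ} (hx₀ : 0 ≤ x) (hx : x ≤ 1 / 2) :
    x / (1 - x) ∈ Icc (0 : ℝ) 1 :=
  ⟨div_nonneg hx₀ (by linarith), (div_le_one (by linarith)).mpr (by linarith)⟩

theorem one_sub_div_mem_Icc {x : ℝ} (hx : 1 / 2 < x) (hx₁ : x ≤ 1) :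
    (1 - x) / x ∈ Icc (0 : ℝ) 1 :=
  ⟨div_nonneg (by linarith) (by linarith), (div_le_one (by linarith)).mpr (by linarith)⟩

theorem minkT_supContractingOn : SupContractingOn (1 / 2) minkT (Icc 0 1) := by
  intro f g C hfg x ⟨hx₀, hx₁⟩
  unfold minkT
  split_ifs with hx
  · rw [← mul_sub, abs_mul, abs_of_pos (by norm_num : (0 : ℝ) < 1 / 2)]
    gcongr
    exact hfg _ (div_one_sub_mem_Icc hx₀ hx)
  · rw [sub_sub_sub_cancel_left, ← mul_sub, abs_mul, abs_of_pos (by norm_num : (0 : ℝ) < 1 / 2),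
      abs_sub_comm]
    gcongr
    exact hfg _ (one_sub_div_mem_Icc (not_le.mp hx) hx₁)

theorem minkT_mapsTo {f : ℝ → ℝ} (hf : MapsTo f (Icc 0 1) (Icc 0 1)) :
    MapsTo (minkT f) (Icc 0 1) (Icc 0 1) := by
  intro x ⟨hx₀, hx₁⟩
  unfold minkT
  split_ifs with hx
  · obtain ⟨h₀, h₁⟩ := hf (div_one_sub_mem_Icc hx₀ hx)
    constructor <;> linarith
  · obtain ⟨h₀, h₁⟩ := hf (one_sub_div_mem_Icc (not_le.mp hx) hx₁)
    constructor <;> linarith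

theorem eqOn_minkT_iff {f : ℝ → ℝ} : EqOn (minkT f) f (Icc 0 1) ↔
    (∀ x ∈ Icc (0 : ℝ) (1 / 2), f x = 1 / 2 * f (x / (1 - x))) ∧
      (∀ x ∈ Ioc (1 / 2 : ℝ) 1, f x = 1 - 1 / 2 * f ((1 - x) / x)) := by
  constructor
  · intro h
    refine ⟨fun x ⟨hx₀, hx⟩ => ?_, fun x ⟨hx, hx₁⟩ => ?_⟩
    · rw [← h ⟨hx₀, by linarith⟩, minkT, if_pos hx]
    · rw [← h ⟨by linarith, hx₁⟩, minkT, if_neg (not_le.mpr hx)]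
  · rintro ⟨hle, hgt⟩ x ⟨hx₀, hx₁⟩
    unfold minkT
    split_ifs with hx
    · exact (hle x ⟨hx₀, hx⟩).symm
    · exact (hgt x ⟨not_le.mp hx, hx₁⟩).symm

theorem apply_zero_and_one_of_eqOn_minkT {f : ℝ → ℝ} (h : EqOn (minkT f) f (Icc 0 1)) :
    f 0 = 0 ∧ f 1 = 1 := by
  have h₀ := h (left_mem_Icc.mpr zero_le_one)
  have h₁ := h (right_mem_Icc.mpr zero_le_one)
  norm_num [minkT] at h₀ h₁
  constructor <;> linarith

theorem minkQ_unique_fixed_point :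
    ((∃ M : ℝ, ∀ x ∈ Set.Icc (0:ℝ) 1, |minkQ x| ≤ M) ∧
      minkQ 0 = 0 ∧ minkQ 1 = 1 ∧
      (∀ x ∈ Set.Icc (0:ℝ) (1/2), minkQ x = (1/2) * minkQ (x / (1 - x))) ∧
      (∀ x ∈ Set.Ioc (1/2 : ℝ) 1, minkQ x = 1 - (1/2) * minkQ ((1 - x) / x))) ∧
    (∀ f : ℝ → ℝ,
      (∃ M : ℝ, ∀ x ∈ Set.Icc (0:ℝ) 1, |f x| ≤ M) →
      f 0 = 0 → f 1 = 1 →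
      (∀ x ∈ Set.Icc (0:ℝ) (1/2), f x = (1/2) * f (x / (1 - x))) →
      (∀ x ∈ Set.Ioc (1/2 : ℝ) 1, f x = 1 - (1/2) * f ((1 - x) / x)) →
      ∀ x ∈ Set.Icc (0:ℝ) 1, f x = minkQ x) := by
  have hT := minkT_supContractingOn
  have hK : (1 / 2 : ℝ) < 1 := by norm_num
  have hK₀ : (0 : ℝ) ≤ 1 / 2 := by norm_num
  have hid : ∀ x ∈ Icc (0 : ℝ) 1, |minkT id x - id x| ≤ 1 := fun x hx =>
    Real.dist_le_of_mem_Icc_01 (minkT_mapsTo (mapsTo_id _) hx) hx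
  have hid_bdd : ∃ M, ∀ x ∈ Icc (0 : ℝ) 1, |id x| ≤ M :=
    ⟨1, fun x ⟨hx₀, hx₁⟩ => abs_le.mpr ⟨by simp only [id_eq]; linarith, hx₁⟩⟩
  have hQ_fixed : EqOn (minkT minkQ) minkQ (Icc 0 1) := hT.iterateLim_fixed hK hid hK₀
  have hQ_bdd : ∃ M, ∀ x ∈ Icc (0 : ℝ) 1, |minkQ x| ≤ M := hT.iterateLim_bounded hK hid hid_bdd
  obtain ⟨hQ₀, hQ₁⟩ := apply_zero_and_one_of_eqOn_minkT hQ_fixed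
  refine ⟨⟨hQ_bdd, hQ₀, hQ₁, eqOn_minkT_iff.mp hQ_fixed⟩, ?_⟩
  intro f hf_bdd _ _ hle hgt
  exact hT.eqOn_of_fixed hK₀ hK hf_bdd hQ_bdd (eqOn_minkT_iff.mpr ⟨hle, hgt⟩) hQ_fixed
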